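/- Let P, Q be affine points of E(ℚ) with X^{1/6} ≤ x(P) < x(Q), and suppose x(P) = x₁/s and x(Q) = x₂/s where x₁, x₂ are integers, s is a positive integer, and gcd(x₁, s) = gcd(x₂, s) = 1. Then P + Q is an affine point and h(P+Q) ≤ h(P) + 2·h(Q) + 2.9. -/

import Mathlib

/-!
Write `x(P) = x₁/s`, `x(Q) = x₂/s`. A point of `y² = x³ + Ax + B` whose abscissa has exact
denominator `s` has ordinate with denominator `d`, `d² = s³`, so `s³ y(P) y(Q)` is an integer and
the addition formula `x(P+Q) = ((x_P x_Q + A)(x_P + x_Q) + 2B − 2 y_P y_Q) / (x_Q − x_P)²`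
becomes a fraction `M / (s (x₂ − x₁)²)` of integers. The hypothesis `X^{1/6} ≤ x(P)` gives
`|A| ≤ x_P²` and `|B| ≤ x_P³`, which bounds `|M|` by `12 x₁ x₂²`; moreover `X ≥ 1`, so `x_P ≥ 1`,
`h(P) = log x₁`, `h(Q) = log x₂`, and `log 12 < 2.9`.
-/

open scoped TensorProduct

noncomputable section

/-- The logarithmic Weil height of a rational number:
`h(p/q) = log max (|p|, q)` for `p/q` in lowest terms. -/
def qh (q : ℚ) : ℝ := Real.log (max (|q.num| : ℝ) (q.den : ℝ))

/-- The short Weierstrass curve `y² = x³ + Ax + B` over `ℚ`. -/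
def Ecurve (A B : ℤ) : WeierstrassCurve.Affine ℚ :=
  { a₁ := 0, a₂ := 0, a₃ := 0, a₄ := (A : ℚ), a₆ := (B : ℚ) }

/-- `X = max (|A|³, |B|²)` as a real number. -/
def Xval (A B : ℤ) : ℝ := max (|(A : ℝ)| ^ 3) (|(B : ℝ)| ^ 2)

/-- The x-coordinate of an affine point (with junk value `0` at the point at infinity). -/
def xCoord {W : WeierstrassCurve.Affine ℚ} : W.Point → ℚ
  | .zero => 0
  | @WeierstrassCurve.Affine.Point.some _ _ _ x _ _ => x

/-- `hh : W.Point → ℝ` is a canonical height for `W`: it vanishes on points of finite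
order, and for every point `P` of infinite order, `h(x(2ⁿ P)) / 4ⁿ → hh P`. -/
def IsCanonicalHeight (W : WeierstrassCurve.Affine ℚ) (hh : W.Point → ℝ) : Prop :=
  (∀ P : W.Point, IsOfFinAddOrder P → hh P = 0) ∧
  (∀ P : W.Point, ¬ IsOfFinAddOrder P →
    Filter.Tendsto (fun n : ℕ => qh (xCoord ((2 ^ n : ℕ) • P)) / 4 ^ n)
      Filter.atTop (nhds (hh P)))

/-- `cos θ_{P,Q} = (ĥ(P+Q) − ĥ(P) − ĥ(Q)) / (2 √(ĥ(P) ĥ(Q)))`. -/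
def cosAngle {W : WeierstrassCurve.Affine ℚ} (hh : W.Point → ℝ) (P Q : W.Point) : ℝ :=
  (hh (P + Q) - hh P - hh Q) / (2 * Real.sqrt (hh P * hh Q))

/-- The rank `dim_ℚ (ℚ ⊗_ℤ G)` of an abelian group `G`. -/
def rankQ (G : Type*) [AddCommGroup G] : ℕ :=
  Module.finrank ℚ (ℚ ⊗[ℤ] G)

end

open WeierstrassCurve WeierstrassCurve.Affine

lemma qh_le_log_max_of_eq_div {q : ℚ} {m d : ℤ} (hd : 0 < d) (hq : q = m / d) :
    qh q ≤ Real.log (max |(m : ℝ)| d) := by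
  rw [← Rat.divInt_eq_div] at hq
  have hnum : |q.num| ≤ |m| := by
    rcases eq_or_ne m 0 with rfl | hm
    · simp [hq]
    · exact Int.le_of_dvd (abs_pos.2 hm) ((abs_dvd_abs _ _).2 (hq ▸ Rat.num_dvd m hd.ne'))
  have hden : (q.den : ℤ) ≤ d := Int.le_of_dvd hd (hq ▸ Rat.den_dvd m d)
  have hden_pos : (0 : ℝ) < q.den := by exact_mod_cast q.pos
  refine Real.log_le_log (hden_pos.trans_le (le_max_right _ _)) (max_le_max ?_ ?_)
  · exact_mod_cast hnum
  · exact_mod_cast hden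

lemma qh_div_of_coprime {x s : ℤ} (hs : 0 < s) (hsx : s ≤ x) (hxs : Int.gcd x s = 1) :
    qh (x / s) = Real.log x := by
  have hden : (((x : ℚ) / s).den : ℤ) = s := Rat.den_div_eq_of_coprime hs hxs
  have hden' : ((((x : ℚ) / s).den : ℕ) : ℝ) = s := by exact_mod_cast hden
  have hx : (0 : ℝ) < x := by exact_mod_cast hs.trans_le hsx
  rw [qh, Rat.num_div_eq_of_coprime hs hxs, hden', abs_of_pos hx,
    max_eq_left (by exact_mod_cast hsx)]

lemma one_le_Xval {A B : ℤ} (hAB : 4 * A ^ 3 + 27 * B ^ 2 ≠ 0) : 1 ≤ Xval A B := by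
  rcases eq_or_ne A 0 with rfl | hA
  · have hB : B ≠ 0 := by rintro rfl; simp at hAB
    have : (1 : ℝ) ≤ |(B : ℝ)| := by exact_mod_cast Int.one_le_abs hB
    exact le_max_of_le_right (one_le_pow₀ this)
  · have : (1 : ℝ) ≤ |(A : ℝ)| := by exact_mod_cast Int.one_le_abs hA
    exact le_max_of_le_left (one_le_pow₀ this)

lemma abs_le_of_Xval_rpow_le {A B : ℤ} {t : ℝ} (h : Xval A B ^ ((1 : ℝ) / 6) ≤ t) :
    |(A : ℝ)| ≤ t ^ 2 ∧ |(B : ℝ)| ≤ t ^ 3 := by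
  have hX : 0 ≤ Xval A B := le_max_of_le_left (by positivity)
  have hX6 : Xval A B ≤ t ^ 6 := by
    calc Xval A B = (Xval A B ^ ((1 : ℝ) / 6)) ^ (6 : ℕ) := by
          rw [← Real.rpow_natCast, ← Real.rpow_mul hX]; norm_num
      _ ≤ t ^ 6 := pow_le_pow_left₀ (by positivity) h 6
  have ht : 0 ≤ t := (Real.rpow_nonneg hX _).trans h
  have hA : |(A : ℝ)| ^ 3 ≤ Xval A B := le_max_left _ _
  have hB : |(B : ℝ)| ^ 2 ≤ Xval A B := le_max_right _ _
  constructor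
  · refine (pow_le_pow_iff_left₀ (abs_nonneg _) (by positivity) three_ne_zero).mp ?_
    linarith [(by ring : (t ^ 2) ^ 3 = t ^ 6)]
  · refine (pow_le_pow_iff_left₀ (abs_nonneg _) (by positivity) two_ne_zero).mp ?_
    linarith [(by ring : (t ^ 3) ^ 2 = t ^ 6)]

lemma abs_addX_numerator_le {K : Type*} [Field K] [LinearOrder K] [IsStrictOrderedRing K]
    {a b x₁ x₂ y₁ y₂ : K} (hx₁ : 0 < x₁) (hx : x₁ ≤ x₂) (ha : |a| ≤ x₁ ^ 2) (hb : |b| ≤ x₁ ^ 3)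
    (h₁ : y₁ ^ 2 = x₁ ^ 3 + a * x₁ + b) (h₂ : y₂ ^ 2 = x₂ ^ 3 + a * x₂ + b) :
    |(x₁ * x₂ + a) * (x₁ + x₂) + 2 * b - 2 * (y₁ * y₂)| ≤ 12 * (x₁ * x₂ ^ 2) := by
  obtain ⟨ha₁, ha₂⟩ := abs_le.mp ha
  obtain ⟨hb₁, hb₂⟩ := abs_le.mp hb
  have hx₂ : 0 < x₂ := hx₁.trans_le hx
  have hsq : x₁ ^ 2 ≤ x₂ ^ 2 := pow_le_pow_left₀ hx₁.le hx 2
  have hcube : x₁ ^ 3 ≤ x₁ * x₂ ^ 2 := by nlinarith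
  have hy₁ : y₁ ^ 2 ≤ 3 * x₁ ^ 3 := by nlinarith
  have hy₂ : y₂ ^ 2 ≤ 3 * x₂ ^ 3 := by nlinarith [mul_le_mul_of_nonneg_right hsq hx₂.le]
  have hyy : -(3 * (x₁ * x₂ ^ 2)) ≤ y₁ * y₂ ∧ y₁ * y₂ ≤ 3 * (x₁ * x₂ ^ 2) := by
    refine abs_le_of_sq_le_sq' ?_ (by positivity)
    nlinarith [mul_le_mul hy₁ hy₂ (sq_nonneg y₂) (by positivity),
      mul_le_mul_of_nonneg_left hx (by positivity : (0 : K) ≤ 9 * x₁ ^ 2 * x₂ ^ 3)]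
  have hfac : 0 ≤ x₁ * x₂ + a := by nlinarith
  have hprod : (x₁ * x₂ + a) * (x₁ + x₂) ≤ 4 * (x₁ * x₂ ^ 2) := by
    nlinarith [mul_le_mul_of_nonneg_left hx hx₁.le]
  have hprod₀ : 0 ≤ (x₁ * x₂ + a) * (x₁ + x₂) := by positivity
  rw [abs_le]
  constructor <;> linarith [hyy.1, hyy.2]

section ShortNF

variable {F : Type*} [Field F] {W : WeierstrassCurve.Affine F} [W.IsShortNF]

lemma equation_iff_of_isShortNF {x y : F} :
    W.Equation x y ↔ y ^ 2 = x ^ 3 + W.a₄ * x + W.a₆ := by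
  simp [equation_iff]

lemma addX_slope_of_isShortNF [DecidableEq F] {x₁ x₂ y₁ y₂ : F} (hx : x₁ ≠ x₂)
    (h₁ : W.Equation x₁ y₁) (h₂ : W.Equation x₂ y₂) :
    W.addX x₁ x₂ (W.slope x₁ x₂ y₁ y₂) =
      ((x₁ * x₂ + W.a₄) * (x₁ + x₂) + 2 * W.a₆ - 2 * (y₁ * y₂)) / (x₂ - x₁) ^ 2 := by
  rw [equation_iff_of_isShortNF] at h₁ h₂
  have h₁₂ : x₁ - x₂ ≠ 0 := sub_ne_zero.2 hx
  have h₂₁ : x₂ - x₁ ≠ 0 := sub_ne_zero.2 hx.symm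
  rw [slope_of_X_ne hx, addX, a₁_of_isShortNF, a₂_of_isShortNF]
  field_simp
  linear_combination (x₂ - x₁) ^ 2 * h₁ + (x₂ - x₁) ^ 2 * h₂

end ShortNF

instance Ecurve.isShortNF (A B : ℤ) : (Ecurve A B).IsShortNF := ⟨rfl, rfl, rfl⟩

lemma den_sq_eq_of_sq_eq_div {y : ℚ} {N t : ℤ} (ht : 0 < t) (hN : IsCoprime N t)
    (hy : y ^ 2 = N / t) : (y.den : ℤ) ^ 2 = t := by
  have h := Rat.den_div_eq_of_coprime ht (Int.isCoprime_iff_gcd_eq_one.mp hN)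
  rwa [← hy, Rat.den_pow, Nat.cast_pow] at h

lemma exists_int_eq_mul_mul_of_den_sq_eq {y z : ℚ} {t : ℤ} (hy : (y.den : ℤ) ^ 2 = t)
    (hz : (z.den : ℤ) ^ 2 = t) : ∃ k : ℤ, (k : ℚ) = t * (y * z) := by
  have hden : y.den = z.den := by
    have h : y.den ^ 2 = z.den ^ 2 := by exact_mod_cast hy.trans hz.symm
    exact Nat.pow_left_injective two_ne_zero h
  refine ⟨y.num * z.num, ?_⟩
  rw [← hy]
  push_cast
  rw [← Rat.mul_den_eq_num y, ← Rat.mul_den_eq_num z, ← hden]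
  ring

lemma Ecurve.den_sq_eq_of_equation {A B x₀ s : ℤ} {y : ℚ} (hs : 0 < s) (hx₀ : Int.gcd x₀ s = 1)
    (h : (Ecurve A B).Equation (x₀ / s) y) : (y.den : ℤ) ^ 2 = s ^ 3 := by
  rw [equation_iff_of_isShortNF] at h
  have hs₀ : (s : ℚ) ≠ 0 := by positivity
  refine den_sq_eq_of_sq_eq_div (N := x₀ ^ 3 + A * s ^ 2 * x₀ + B * s ^ 3) (by positivity) ?_ ?_
  · rw [show x₀ ^ 3 + A * s ^ 2 * x₀ + B * s ^ 3 = x₀ ^ 3 + s * (A * s * x₀ + B * s ^ 2) by ring]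
    exact ((Int.isCoprime_iff_gcd_eq_one.mpr hx₀).pow_left.add_mul_left_left _).pow_right
  · rw [h]
    simp only [Ecurve]
    field_simp
    push_cast
    ring

lemma Ecurve.qh_addX_le {A B x₁ x₂ s : ℤ} {y₁ y₂ : ℚ} (hs : 0 < s) (hsx : s ≤ x₁) (hx : x₁ < x₂)
    (hg₁ : Int.gcd x₁ s = 1) (hg₂ : Int.gcd x₂ s = 1)
    (hA : |(A : ℚ)| ≤ (x₁ / s) ^ 2) (hB : |(B : ℚ)| ≤ (x₁ / s) ^ 3)
    (h₁ : (Ecurve A B).Equation (x₁ / s) y₁) (h₂ : (Ecurve A B).Equation (x₂ / s) y₂) :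
    qh ((Ecurve A B).addX (x₁ / s) (x₂ / s) ((Ecurve A B).slope (x₁ / s) (x₂ / s) y₁ y₂)) ≤
      Real.log 12 + Real.log x₁ + 2 * Real.log x₂ := by
  have hsQ : (0 : ℚ) < s := by exact_mod_cast hs
  have hxQ : (x₁ : ℚ) < x₂ := by exact_mod_cast hx
  have hx₀ : 0 < x₁ := hs.trans_le hsx
  obtain ⟨k, hk⟩ := exists_int_eq_mul_mul_of_den_sq_eq
    (Ecurve.den_sq_eq_of_equation hs hg₁ h₁) (Ecurve.den_sq_eq_of_equation hs hg₂ h₂)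
  set M : ℤ := (x₁ * x₂ + A * s ^ 2) * (x₁ + x₂) + 2 * B * s ^ 3 - 2 * k
  set D : ℤ := s * (x₂ - x₁) ^ 2
  have hD : 0 < D := by positivity
  have hM : (M : ℚ) = s ^ 3 * ((x₁ / s * (x₂ / s) + A) * (x₁ / s + x₂ / s) + 2 * B -
      2 * (y₁ * y₂)) := by
    simp only [M]
    push_cast at hk ⊢
    rw [hk]
    field_simp
  have haddX : (Ecurve A B).addX (x₁ / s) (x₂ / s) ((Ecurve A B).slope (x₁ / s) (x₂ / s) y₁ y₂) =
      M / D := by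
    rw [addX_slope_of_isShortNF (by rw [Ne, div_left_inj' hsQ.ne']; exact hxQ.ne) h₁ h₂, hM]
    simp only [D, Ecurve]
    push_cast
    field_simp
  have hM_le : |M| ≤ 12 * (x₁ * x₂ ^ 2) := by
    have h := abs_addX_numerator_le (by positivity)
      ((div_le_div_iff_of_pos_right hsQ).mpr hxQ.le) hA hB
      ((equation_iff_of_isShortNF).mp h₁) ((equation_iff_of_isShortNF).mp h₂)
    have h' : |(M : ℚ)| ≤ 12 * (x₁ * x₂ ^ 2) := by
      rw [hM, abs_mul, abs_of_pos (by positivity)]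
      calc _ ≤ (s : ℚ) ^ 3 * (12 * (x₁ / s * (x₂ / s) ^ 2)) :=
            mul_le_mul_of_nonneg_left h (by positivity)
        _ = 12 * (x₁ * x₂ ^ 2) := by field_simp
    exact_mod_cast h'
  have hD_le : D ≤ 12 * (x₁ * x₂ ^ 2) := by
    have : (x₂ - x₁) ^ 2 ≤ x₂ ^ 2 := by nlinarith
    calc D ≤ x₁ * x₂ ^ 2 := mul_le_mul hsx this (sq_nonneg _) hx₀.le
      _ ≤ 12 * (x₁ * x₂ ^ 2) := by nlinarith [sq_nonneg x₂]
  calc _ ≤ Real.log (max |(M : ℝ)| D) := qh_le_log_max_of_eq_div hD haddX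
    _ ≤ Real.log (12 * (x₁ * x₂ ^ 2)) := by
      refine Real.log_le_log (by positivity) (max_le ?_ ?_)
      · exact_mod_cast hM_le
      · exact_mod_cast hD_le
    _ = Real.log 12 + Real.log x₁ + 2 * Real.log x₂ := by
      have : (0 : ℝ) < x₁ := by exact_mod_cast hx₀
      have : (0 : ℝ) < x₂ := by exact_mod_cast hx₀.trans hx
      rw [Real.log_mul (by norm_num) (by positivity), Real.log_mul (by positivity) (by positivity),
        Real.log_pow]
      push_cast
      ring

lemma Real.log_twelve_le : Real.log 12 ≤ 2.9 := by
  have h : Real.log 16 = 4 * Real.log 2 := by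
    rw [show (16 : ℝ) = 2 ^ 4 by norm_num, Real.log_pow]; norm_num
  linarith [Real.log_le_log (by norm_num) (by norm_num : (12 : ℝ) ≤ 16), Real.log_two_lt_d9]

theorem statement3 (A B : ℤ) (hAB : 4 * A ^ 3 + 27 * B ^ 2 ≠ 0)
    (P Q : (Ecurve A B).Point) (hP : P ≠ 0) (hQ : Q ≠ 0)
    (hXP : Xval A B ^ ((1 : ℝ) / 6) ≤ ((xCoord P : ℚ) : ℝ))
    (hPQ : xCoord P < xCoord Q)
    (x₁ x₂ s : ℤ) (hs : 0 < s)
    (hx₁ : xCoord P = (x₁ : ℚ) / (s : ℚ)) (hx₂ : xCoord Q = (x₂ : ℚ) / (s : ℚ))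
    (hg₁ : Int.gcd x₁ s = 1) (hg₂ : Int.gcd x₂ s = 1) :
    P + Q ≠ 0 ∧
    qh (xCoord (P + Q)) ≤ qh (xCoord P) + 2 * qh (xCoord Q) + 2.9 := by
  obtain _ | @⟨xP, yP, hP₀⟩ := P
  · exact absurd rfl hP
  obtain _ | @⟨xQ, yQ, hQ₀⟩ := Q
  · exact absurd rfl hQ
  simp only [xCoord] at hXP hPQ hx₁ hx₂ ⊢
  subst hx₁ hx₂
  rw [Point.add_of_X_ne hPQ.ne]
  refine ⟨Point.some_ne_zero _, ?_⟩
  have hsQ : (0 : ℚ) < s := by exact_mod_cast hs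
  have hxP : (1 : ℚ) ≤ x₁ / s := by
    exact_mod_cast (Real.one_le_rpow (one_le_Xval hAB) (by norm_num)).trans hXP
  have hsx : s ≤ x₁ := by exact_mod_cast (one_le_div hsQ).mp hxP
  have hx : x₁ < x₂ := by exact_mod_cast (div_lt_div_iff_of_pos_right hsQ).mp hPQ
  obtain ⟨hA, hB⟩ := abs_le_of_Xval_rpow_le hXP
  rw [qh_div_of_coprime hs hsx hg₁, qh_div_of_coprime hs (hsx.trans hx.le) hg₂]
  linarith [Ecurve.qh_addX_le hs hsx hx hg₁ hg₂ (by exact_mod_cast hA) (by exact_mod_cast hB)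
    hP₀.1 hQ₀.1, Real.log_twelve_le]
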